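/- arXiv:math/0412022 — 3 statements merged into one kernel-verified Lean document; each statement's English description precedes it below -/
import Mathlib

section
/- Define the free genus of a finite group G as the minimal genus of a closed orientable surface admitting a free orientation-preserving G-action. If r is the minimal number of generators of G, then ([(r+1)/2] - 1)·|G| + 1 ≤ free genus of G ≤ (r-1)·|G| + 1, where [x] denotes the floor function. -/
open scoped commutatorElement

/-- The single defining relation `[x_1,y_1] ⋯ [x_n,y_n]` of the genus-`n` surface group. -/
def surfaceRel (n : ℕ) : FreeGroup (Fin n ⊕ Fin n) :=
  (List.ofFn fun i : Fin n =>
    ⁅(FreeGroup.of (Sum.inl i) : FreeGroup (Fin n ⊕ Fin n)), FreeGroup.of (Sum.inr i)⁆).prod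

/-- The fundamental group of the closed orientable surface of genus `n`. -/
abbrev SurfaceGroup (n : ℕ) : Type :=
  PresentedGroup ({surfaceRel n} : Set (FreeGroup (Fin n ⊕ Fin n)))

/-- The set of genera `m` of closed orientable surfaces admitting a free
orientation-preserving `G`-action: a free `G`-action on a genus-`m` surface is
equivalent to a regular covering `Σ_m → Σ_n` with deck group `G`, i.e. to a
surjection `π₁(Σ_n) ↠ G`, together with the Riemann–Hurwitz relation
`m - 1 = |G| * (n - 1)`. -/
def freeGenusSet (G : Type*) [Group G] [Fintype G] : Set ℕ :=
  {m : ℕ | ∃ n : ℕ, (m : ℤ) - 1 = (Fintype.card G : ℤ) * ((n : ℤ) - 1) ∧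
    ∃ φ : SurfaceGroup n →* G, Function.Surjective φ}

/-- The free genus of a finite group `G`: the minimal genus of a closed orientable
surface admitting a free orientation-preserving `G`-action. -/
noncomputable def freeGenus (G : Type*) [Group G] [Fintype G] : ℕ :=
  sInf (freeGenusSet G)

/- A surjection `π₁(Σ_n) ↠ G` exists as soon as `G` is `n`-generated: send both `x_i` and `y_i`
to the `i`-th generator, which kills every commutator `[x_i, y_i]`. Conversely the images of the
`2n` standard generators of `π₁(Σ_n)` generate `G`. So every free genus is `(n - 1)|G| + 1` for
some `n ≥ 1` with `r ≤ 2n` (nontriviality of `G` rules out `n = 0`), and `n = r` occurs. -/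

section SurfaceGroup

variable {G : Type*} [Group G]

lemma lift_surfaceRel_sumElim_self {n : ℕ} (c : Fin n → G) :
    FreeGroup.lift (Sum.elim c c) (surfaceRel n) = 1 := by
  rw [surfaceRel, map_list_prod, List.map_ofFn]
  refine List.prod_eq_one fun x hx => ?_
  obtain ⟨i, rfl⟩ := List.mem_ofFn.mp hx
  simp [map_commutatorElement]

lemma exists_surjective_surfaceGroup_of_closure_eq_top {n : ℕ} (c : Fin n → G)
    (hc : Subgroup.closure (Set.range c) = ⊤) :
    ∃ φ : SurfaceGroup n →* G, Function.Surjective φ := by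
  have hrel : ∀ x ∈ ({surfaceRel n} : Set _), FreeGroup.lift (Sum.elim c c) x = 1 := by
    rintro x rfl
    exact lift_surfaceRel_sumElim_self c
  refine ⟨PresentedGroup.toGroup hrel, ?_⟩
  rw [← MonoidHom.range_eq_top, eq_top_iff, ← hc, Subgroup.closure_le]
  rintro _ ⟨i, rfl⟩
  exact ⟨PresentedGroup.of (Sum.inl i), PresentedGroup.toGroup.of hrel⟩

lemma PresentedGroup.closure_range_comp_of_surjective {α : Type*} {rels : Set (FreeGroup α)}
    {φ : PresentedGroup rels →* G} (hφ : Function.Surjective φ) :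
    Subgroup.closure (Set.range (φ ∘ PresentedGroup.of)) = ⊤ := by
  rw [Set.range_comp, ← MonoidHom.map_closure, PresentedGroup.closure_range_of,
    ← MonoidHom.range_eq_map, MonoidHom.range_eq_top.mpr hφ]

lemma exists_closure_eq_top_of_surjective_surfaceGroup {n : ℕ} {φ : SurfaceGroup n →* G}
    (hφ : Function.Surjective φ) :
    ∃ c : Fin (n + n) → G, Subgroup.closure (Set.range c) = ⊤ := by
  refine ⟨φ ∘ PresentedGroup.of ∘ finSumFinEquiv.symm, ?_⟩
  rw [← Function.comp_assoc, finSumFinEquiv.symm.surjective.range_comp]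
  exact PresentedGroup.closure_range_comp_of_surjective hφ

lemma pos_of_closure_range_eq_top [Nontrivial G] {k : ℕ} {c : Fin k → G}
    (hc : Subgroup.closure (Set.range c) = ⊤) : 0 < k := by
  refine Nat.pos_of_ne_zero fun hk => (bot_ne_top : (⊥ : Subgroup G) ≠ ⊤) ?_
  subst hk
  rwa [Set.range_eq_empty, Subgroup.closure_empty] at hc

end SurfaceGroup

section FreeGenus

variable {G : Type*} [Group G] [Fintype G]

lemma mem_freeGenusSet_of_surjective {n : ℕ} (hn : 1 ≤ n) {φ : SurfaceGroup n →* G}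
    (hφ : Function.Surjective φ) : (n - 1) * Fintype.card G + 1 ∈ freeGenusSet G :=
  ⟨n, by push_cast [Nat.cast_sub hn]; ring, φ, hφ⟩

lemma exists_eq_of_mem_freeGenusSet [Nontrivial G] {m : ℕ} (hm : m ∈ freeGenusSet G) :
    ∃ n, 1 ≤ n ∧ m = (n - 1) * Fintype.card G + 1 ∧
      ∃ φ : SurfaceGroup n →* G, Function.Surjective φ := by
  obtain ⟨n, heq, hφ⟩ := hm
  have hcard : 1 < Fintype.card G := Fintype.one_lt_card
  have hn : 1 ≤ n := by
    by_contra! h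
    obtain rfl : n = 0 := by omega
    push_cast at heq
    omega
  refine ⟨n, hn, ?_, hφ⟩
  zify [hn]
  linarith

end FreeGenus

/-- If `r` is the minimal number of generators of the nontrivial finite group `G`, then
`([(r+1)/2] - 1)·|G| + 1 ≤ free genus of G ≤ (r-1)·|G| + 1`. -/
theorem freeGenus_bounds (G : Type*) [Group G] [Fintype G] [Nontrivial G] (r : ℕ)
    (hr : IsLeast {k : ℕ | ∃ c : Fin k → G, Subgroup.closure (Set.range c) = ⊤} r) :
    ((r + 1) / 2 - 1) * Fintype.card G + 1 ≤ freeGenus G ∧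
      freeGenus G ≤ (r - 1) * Fintype.card G + 1 := by
  obtain ⟨c, hc⟩ := hr.1
  obtain ⟨φ, hφ⟩ := exists_surjective_surfaceGroup_of_closure_eq_top c hc
  have hmem := mem_freeGenusSet_of_surjective (pos_of_closure_range_eq_top hc) hφ
  refine ⟨le_csInf ⟨_, hmem⟩ fun m hm => ?_, Nat.sInf_le hmem⟩
  obtain ⟨n, -, rfl, ψ, hψ⟩ := exists_eq_of_mem_freeGenusSet hm
  have hrn : r ≤ n + n := hr.2 (exists_closure_eq_top_of_surjective_surfaceGroup hψ)
  gcongr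
  omega
end

section
/- For an integer p ≥ 2, Σ_{k=1}^{p-1} cot²(πk/p) = (p-1)(p-2)/3. -/
open Finset Complex

private lemma geomz {z : ℂ} {p : ℕ} (h1 : z ^ p = 1) (hz : z ≠ 1) :
    ∑ j ∈ range p, z ^ j = 0 := by
  rw [geom_sum_eq hz p, h1, sub_self, zero_div]

private lemma sum_j (z : ℂ) (n : ℕ) :
    (z - 1) * ∑ j ∈ range n, (j : ℂ) * z ^ j
      = ((n : ℂ) - 1) * z ^ n - ∑ j ∈ range n, z ^ j + 1 := by
  induction n with
  | zero => simp
  | succ n ih =>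
    rw [sum_range_succ, sum_range_succ, mul_add, ih]
    push_cast; ring

private lemma sum_j2 (z : ℂ) (n : ℕ) :
    (z - 1) * ∑ j ∈ range n, (j : ℂ) ^ 2 * z ^ j
      = ((n : ℂ) - 1) ^ 2 * z ^ n - 2 * ∑ j ∈ range n, (j : ℂ) * z ^ j
        + ∑ j ∈ range n, z ^ j - 1 := by
  induction n with
  | zero => simp
  | succ n ih =>
    rw [sum_range_succ, sum_range_succ, sum_range_succ, mul_add, ih]
    push_cast; ring

private lemma keylem {z : ℂ} {p : ℕ} (h1 : z ^ p = 1) (hz : z ≠ 1) :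
    (z - 1) ^ 2 * ∑ j ∈ range p, (j : ℂ) * ((j : ℂ) - p) * z ^ j = -2 * p * z := by
  have hA := sum_j z p
  have hB := sum_j2 z p
  rw [h1, geomz h1 hz] at hA hB
  have split : ∑ j ∈ range p, (j : ℂ) * ((j : ℂ) - p) * z ^ j
      = (∑ j ∈ range p, (j : ℂ) ^ 2 * z ^ j) - p * ∑ j ∈ range p, (j : ℂ) * z ^ j := by
    rw [Finset.mul_sum, ← Finset.sum_sub_distrib]
    exact Finset.sum_congr rfl fun j _ => by ring
  rw [split]
  linear_combination (z - 1) * hB + (-(p : ℂ) * (z - 1) - 2) * hA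

private lemma cot_sq_eq {θ : ℝ} {z : ℂ} (hz : z = Complex.exp (2 * θ * Complex.I))
    (h1 : z ≠ 1) :
    ((Real.cot θ : ℂ)) ^ 2 = -1 - 4 * z / (z - 1) ^ 2 := by
  set e := Complex.exp (↑θ * Complex.I) with hedef
  have he : e ≠ 0 := Complex.exp_ne_zero _
  have hz' : z = e ^ 2 := by
    rw [hz, hedef, ← Complex.exp_nat_mul]
    ring_nf
  have hz1 : e ^ 2 - 1 ≠ 0 := by rw [← hz']; exact sub_ne_zero.2 h1
  have hc2 : (Complex.cos θ) ^ 2 = (e ^ 2 + 1) ^ 2 / (4 * e ^ 2) := by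
    rw [Complex.cos, neg_mul, Complex.exp_neg, ← hedef]
    field_simp
    ring
  have hs2 : (Complex.sin θ) ^ 2 = -((e ^ 2 - 1) ^ 2 / (4 * e ^ 2)) := by
    rw [Complex.sin, neg_mul, Complex.exp_neg, ← hedef]
    rw [div_pow, mul_pow, Complex.I_sq]
    field_simp
    ring
  rw [Real.cot_eq_cos_div_sin]
  push_cast
  rw [div_pow, hc2, hs2, hz']
  field_simp
  ring

private lemma sum_id_c (n : ℕ) : ∑ j ∈ range n, (j : ℂ) = n * (n - 1) / 2 := by
  induction n with
  | zero => simp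
  | succ n ih => rw [sum_range_succ, ih]; push_cast; ring

private lemma sum_sq_c (n : ℕ) : ∑ j ∈ range n, (j : ℂ) ^ 2 = n * (n - 1) * (2 * n - 1) / 6 := by
  induction n with
  | zero => simp
  | succ n ih => rw [sum_range_succ, ih]; push_cast; ring

/-- For an integer `p ≥ 2`, `∑_{k=1}^{p-1} cot²(πk/p) = (p-1)(p-2)/3`. -/
theorem sum_cot_sq (p : ℕ) (hp : 2 ≤ p) :
    ∑ k ∈ Finset.Icc 1 (p - 1), Real.cot (Real.pi * k / p) ^ 2 =
      ((p : ℝ) - 1) * ((p : ℝ) - 2) / 3 := by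
  have hp0 : (p : ℂ) ≠ 0 := Nat.cast_ne_zero.2 (by omega)
  apply Complex.ofReal_injective
  rw [Complex.ofReal_sum]
  simp only [Complex.ofReal_pow]
  rw [show ((((p : ℝ) - 1) * ((p : ℝ) - 2) / 3 : ℝ) : ℂ) = ((p : ℂ) - 1) * ((p : ℂ) - 2) / 3 by
    push_cast; ring]
  set ζ : ℂ := Complex.exp (2 * Real.pi * Complex.I / p) with hζ
  have hprim : IsPrimitiveRoot ζ p := Complex.isPrimitiveRoot_exp p (by omega)
  have step : ∀ k ∈ Icc 1 (p - 1), ((Real.cot (Real.pi * k / p) : ℂ)) ^ 2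
      = -1 + (2 / p) * ∑ j ∈ range p, (j : ℂ) * ((j : ℂ) - p) * (ζ ^ j) ^ k := by
    intro k hk
    simp only [mem_Icc] at hk
    have hkp : k < p := by omega
    have hzk1 : ζ ^ k ≠ 1 := hprim.pow_ne_one_of_pos_of_lt (by omega) hkp
    have hzkp : (ζ ^ k) ^ p = 1 := by
      rw [← pow_mul, mul_comm, pow_mul, hprim.pow_eq_one, one_pow]
    have hzexp : ζ ^ k = Complex.exp (2 * (Real.pi * k / p : ℝ) * Complex.I) := by
      rw [hζ, ← Complex.exp_nat_mul]
      congr 1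
      push_cast
      ring
    have hc := cot_sq_eq hzexp hzk1
    rw [hc]
    have hne : (ζ ^ k - 1) ^ 2 ≠ 0 := pow_ne_zero _ (sub_ne_zero.2 hzk1)
    have hS : ∑ j ∈ range p, (j : ℂ) * ((j : ℂ) - p) * (ζ ^ j) ^ k
        = -2 * p * ζ ^ k / (ζ ^ k - 1) ^ 2 := by
      rw [eq_div_iff hne, mul_comm]
      rw [← keylem hzkp hzk1]
      congr 1
      exact Finset.sum_congr rfl fun j _ => by rw [← pow_mul, ← pow_mul, mul_comm j k]
    rw [hS]
    field_simp
    ring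
  rw [Finset.sum_congr rfl step, Finset.sum_add_distrib, Finset.sum_const, ← Finset.mul_sum,
    Finset.sum_comm]
  have inner : ∀ j ∈ range p, ∑ k ∈ Icc 1 (p - 1), (j : ℂ) * ((j : ℂ) - p) * (ζ ^ j) ^ k
      = -((j : ℂ) * ((j : ℂ) - p)) := by
    intro j hj
    simp only [mem_range] at hj
    rcases Nat.eq_zero_or_pos j with h0 | h0
    · subst h0; simp
    · have hzj1 : ζ ^ j ≠ 1 := hprim.pow_ne_one_of_pos_of_lt h0.ne' hj
      have hzjp : (ζ ^ j) ^ p = 1 := by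
        rw [← pow_mul, mul_comm, pow_mul, hprim.pow_eq_one, one_pow]
      rw [← Finset.mul_sum]
      have hs : ∑ k ∈ Icc 1 (p - 1), (ζ ^ j) ^ k = -1 := by
        have hg : ∑ k ∈ range p, (ζ ^ j) ^ k = 0 := geomz hzjp hzj1
        have hr : range p = insert 0 (Icc 1 (p - 1)) := by
          ext x
          simp only [Finset.mem_range, Finset.mem_insert, Finset.mem_Icc]
          omega
        rw [hr, Finset.sum_insert (by simp)] at hg
        simp only [pow_zero] at hg
        linear_combination hg
      rw [hs]; ring
  rw [Finset.sum_congr rfl inner]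
  have hsplit : ∑ j ∈ range p, -((j : ℂ) * ((j : ℂ) - p))
      = p * (∑ j ∈ range p, (j : ℂ)) - ∑ j ∈ range p, (j : ℂ) ^ 2 := by
    rw [Finset.mul_sum, ← Finset.sum_sub_distrib]
    exact Finset.sum_congr rfl fun j _ => by ring
  rw [hsplit, sum_id_c, sum_sq_c, Nat.card_Icc]
  have hcard : ((p - 1 + 1 - 1 : ℕ) : ℂ) = (p : ℂ) - 1 := by
    push_cast [Nat.cast_sub (by omega : 1 ≤ p)]
    ring
  rw [nsmul_eq_mul, hcard]
  field_simp
  ring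
end

section
/- For integers p ≥ 2 and q coprime to p, I_{p,q} := Σ_{k=1}^{p-1} (1+μ_p^k)(1+μ_p^{kq}) / ((1-μ_p^k)(1-μ_p^{kq})) satisfies I_{p,q} = -4p·s(q,p), where s(q,p) is the Dedekind sum. -/
open Complex

/-- The sawtooth function `((x)) = x - ⌊x⌋ - 1/2` for `x ∉ ℤ`, and `((x)) = 0` for `x ∈ ℤ`. -/
noncomputable def saw (x : ℝ) : ℝ :=
  if Int.fract x = 0 then 0 else Int.fract x - 1 / 2

section helper

lemma saw_int_add (x : ℝ) (n : ℤ) : saw (x + n) = saw x := by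
  simp [saw, Int.fract_add_intCast]

lemma saw_neg (x : ℝ) : saw (-x) = - saw x := by
  rcases eq_or_ne (Int.fract x) 0 with h | h
  · have h1 : Int.fract (-x) = 0 := Int.fract_neg_eq_zero.mpr h
    simp [saw, h, h1]
  · have h2 : Int.fract (-x) = 1 - Int.fract x := Int.fract_neg h
    have h3 : Int.fract (-x) ≠ 0 := fun c => h (Int.fract_neg_eq_zero.mp c)
    rw [saw, saw, if_neg h3, if_neg h, h2]; ring

lemma sum_Icc_eq_range_sub {M : Type*} [AddCommGroup M] (p : ℕ) (hp : 1 ≤ p) (f : ℕ → M) :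
    ∑ m ∈ Finset.Icc 1 (p-1), f m = (∑ m ∈ Finset.range p, f m) - f 0 := by
  have h : Finset.Icc 1 (p-1) = Finset.Ico 1 p := by
    rw [← Finset.Ico_add_one_right_eq_Icc]; congr 1; omega
  rw [h, Finset.range_eq_Ico, ← Finset.sum_Ico_consecutive _ (Nat.zero_le 1) hp]
  simp

lemma geom_zero (p : ℕ) (x : ℂ) (hx : x ≠ 1) (hxp : x ^ p = 1) :
    ∑ m ∈ Finset.range p, x^m = 0 := by
  rw [geom_sum_eq hx, hxp, sub_self, zero_div]

lemma weighted_geom (x : ℂ) (n : ℕ) :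
    (x - 1) * ∑ m ∈ Finset.range n, (m:ℂ) * x^m
      = ((n:ℂ)-1)*x^n - (∑ m ∈ Finset.range n, x^m) + 1 := by
  induction n with
  | zero => simp
  | succ n ih =>
    rw [Finset.sum_range_succ, Finset.sum_range_succ, mul_add, ih]
    push_cast
    ring

lemma saw_fourier (p : ℕ) (hp : 2 ≤ p) (x : ℂ) (hx : x ≠ 1) (hxp : x ^ p = 1) :
    ∑ m ∈ Finset.Icc 1 (p-1), ((saw ((m:ℝ)/p) : ℝ) : ℂ) * x^m
      = (1+x) / (2*(x-1)) := by
  have hx1 : x - 1 ≠ 0 := sub_ne_zero.mpr hx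
  have hpR : (p:ℂ) ≠ 0 := Nat.cast_ne_zero.mpr (by omega)
  have hstep : ∀ m ∈ Finset.Icc 1 (p-1),
      ((saw ((m:ℝ)/p) : ℝ) : ℂ) * x^m = ((m:ℂ)/p - 1/2) * x^m := by
    intro m hm
    rw [Finset.mem_Icc] at hm
    have hp0 : (0:ℝ) < p := by positivity
    have hm0 : (0:ℝ) < m := by exact_mod_cast hm.1
    have h2 : (m:ℝ)/p < 1 := by
      rw [div_lt_one hp0]; exact_mod_cast (by omega : m < p)
    have hf : Int.fract ((m:ℝ)/p) = (m:ℝ)/p := Int.fract_eq_self.mpr ⟨le_of_lt (div_pos hm0 hp0), h2⟩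
    rw [saw, hf, if_neg (by positivity)]
    push_cast
    ring_nf
  rw [Finset.sum_congr rfl hstep,
    sum_Icc_eq_range_sub p (by omega) (fun m => ((m:ℂ)/p - 1/2) * x^m)]
  have hgeom : ∑ m ∈ Finset.range p, x^m = 0 := geom_zero p x hx hxp
  have hw : ∑ m ∈ Finset.range p, (m:ℂ) * x^m = p / (x-1) := by
    have h := weighted_geom x p
    rw [hxp, hgeom] at h
    field_simp at h ⊢
    linear_combination h
  have hsplit : ∑ m ∈ Finset.range p, ((m:ℂ)/p - 1/2) * x^m
      = (1/p) * (∑ m ∈ Finset.range p, (m:ℂ) * x^m) - (1/2) * ∑ m ∈ Finset.range p, x^m := by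
    rw [Finset.mul_sum, Finset.mul_sum, ← Finset.sum_sub_distrib]
    apply Finset.sum_congr rfl
    intro m _
    ring
  rw [hsplit, hw, hgeom]
  field_simp
  ring

lemma root_sum (p : ℕ) (hp : 2 ≤ p) (y : ℂ) (hyp : y ^ p = 1) :
    ∑ k ∈ Finset.Icc 1 (p-1), y^k = (if y = 1 then (p:ℂ) else 0) - 1 := by
  rcases eq_or_ne y 1 with h | h
  · have hcard : (Finset.Icc 1 (p-1)).card = p - 1 := by
      rw [Nat.card_Icc]; omega
    rw [if_pos h, h]
    simp only [one_pow, Finset.sum_const, hcard, nsmul_eq_mul, mul_one]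
    rw [Nat.cast_sub (by omega)]; simp
  · rw [if_neg h, sum_Icc_eq_range_sub p (by omega), geom_zero p y h hyp]
    simp

lemma saw_sum_zero (p : ℕ) (hp : 2 ≤ p) :
    ∑ m ∈ Finset.Icc 1 (p-1), ((saw ((m : ℝ) / p) : ℝ) : ℂ) = 0 := by
  have h : ∀ m ∈ Finset.Icc 1 (p-1), ((saw ((m:ℝ)/p) : ℝ) : ℂ) = (m:ℂ)/p - 1/2 := by
    intro m hm
    rw [Finset.mem_Icc] at hm
    have hp0 : (0:ℝ) < p := by positivity
    have hm0 : (0:ℝ) < m := by exact_mod_cast hm.1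
    have h2 : (m:ℝ)/p < 1 := by
      rw [div_lt_one hp0]; exact_mod_cast (by omega : m < p)
    have hf : Int.fract ((m:ℝ)/p) = (m:ℝ)/p := Int.fract_eq_self.mpr ⟨le_of_lt (div_pos hm0 hp0), h2⟩
    rw [saw, hf, if_neg (by positivity)]
    push_cast
    ring
  rw [Finset.sum_congr rfl h]
  have hpC : (p:ℂ) ≠ 0 := Nat.cast_ne_zero.mpr (by omega)
  have hsum : ∑ m ∈ Finset.Icc 1 (p-1), ((m:ℂ)/p - 1/2)
      = (∑ m ∈ Finset.Icc 1 (p-1), (m:ℂ))/p - (p-1)/2 := by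
    rw [Finset.sum_sub_distrib, ← Finset.sum_div]
    congr 1
    have hcard : (Finset.Icc 1 (p-1)).card = p - 1 := by rw [Nat.card_Icc]; omega
    simp only [Finset.sum_const, hcard, nsmul_eq_mul]
    rw [Nat.cast_sub (by omega)]
    ring
  rw [hsum]
  have hg : ∑ m ∈ Finset.Icc 1 (p-1), (m:ℂ) = (p:ℂ)*((p:ℂ)-1)/2 := by
    have h3 : ∑ m ∈ Finset.Icc 1 (p-1), m = ∑ m ∈ Finset.range p, m := by
      have he : Finset.Icc 1 (p-1) = Finset.Ico 1 p := by
        rw [← Finset.Ico_add_one_right_eq_Icc]; congr 1; omega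
      rw [he, Finset.range_eq_Ico,
        ← Finset.sum_Ico_consecutive _ (Nat.zero_le 1) (by omega : 1 ≤ p)]
      simp
    have h2 : (∑ m ∈ Finset.Icc 1 (p-1), m) * 2 = p * (p-1) := by
      rw [h3, Finset.sum_range_id_mul_two]
    have h4 := congrArg (Nat.cast : ℕ → ℂ) h2
    push_cast [Nat.cast_sub (by omega : 1 ≤ p)] at h4
    linear_combination h4 / 2
  rw [hg]
  field_simp
  ring

lemma pick (p : ℕ) (hp : 2 ≤ p) (q : ℤ) (hq : IsCoprime q (p:ℤ)) (l : ℕ)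
    (hl1 : 1 ≤ l) (hl2 : l ≤ p - 1) :
    ∑ m ∈ Finset.Icc 1 (p-1), (if ((p:ℤ) ∣ (m:ℤ) + (l:ℤ)*q) then ((saw ((m:ℝ)/p) : ℝ):ℂ) else 0)
      = ((-(saw ((l:ℝ) * q / p)) : ℝ) : ℂ) := by
  have hpz : (0:ℤ) < (p:ℤ) := by exact_mod_cast (by omega : 0 < p)
  set a : ℤ := -((l:ℤ)*q) with ha
  set m₀ : ℕ := (a % p).toNat with hm₀
  have hmod_nonneg : 0 ≤ a % p := Int.emod_nonneg a (by omega)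
  have hmod_lt : a % p < p := Int.emod_lt_of_pos a hpz
  have hm₀int : (m₀ : ℤ) = a % p := Int.toNat_of_nonneg hmod_nonneg
  have hndvd : ¬ ((p:ℤ) ∣ (l:ℤ)*q) := by
    intro hdvd
    have hpl : (p:ℤ) ∣ (l:ℤ) := (hq.symm).dvd_of_dvd_mul_right hdvd
    have : (p:ℤ) ≤ l := Int.le_of_dvd (by exact_mod_cast hl1) hpl
    omega
  have hm₀ne : (m₀:ℤ) ≠ 0 := by
    rw [hm₀int]
    intro h
    apply hndvd
    have : (p:ℤ) ∣ a := Int.dvd_of_emod_eq_zero h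
    simpa [ha, dvd_neg] using this
  have hm₀mem : m₀ ∈ Finset.Icc 1 (p-1) := by
    rw [Finset.mem_Icc]
    constructor
    · omega
    · omega
  have hdvd₀ : (p:ℤ) ∣ (m₀:ℤ) + (l:ℤ)*q := by
    rw [hm₀int]
    have := Int.emod_add_mul_ediv a p
    refine ⟨-(a / p), by linarith [this]⟩
  rw [Finset.sum_eq_single_of_mem m₀ hm₀mem]
  · rw [if_pos hdvd₀]
    have hre : saw ((m₀:ℝ)/p) = -saw ((l:ℝ)*q/p) := by
      obtain ⟨d, hd⟩ := hdvd₀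
      have hdr : (m₀:ℝ) = -((l:ℝ)*q) + (p:ℝ)*d := by
        have h' : (m₀:ℤ) = -((l:ℤ)*q) + (p:ℤ)*d := by linarith [hd]
        exact_mod_cast congrArg (Int.cast : ℤ → ℝ) h'
      have hpR : (p:ℝ) ≠ 0 := by positivity
      have hdiv : (m₀:ℝ)/p = -((l:ℝ)*q/p) + (d:ℤ) := by
        rw [hdr]; field_simp
      rw [hdiv, saw_int_add, saw_neg]
    rw [hre]
  · intro m hm hne
    rw [Finset.mem_Icc] at hm
    rw [if_neg]
    intro hdvd
    obtain ⟨c, hc⟩ := hdvd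
    obtain ⟨d, hd⟩ := hdvd₀
    have hsub : (m:ℤ) - m₀ = p * (c - d) := by linarith
    have hmlt : (m:ℤ) < p := by exact_mod_cast (by omega : m < p)
    have hmge : (1:ℤ) ≤ m := by exact_mod_cast hm.1
    have hm₀ge : (1:ℤ) ≤ m₀ := by omega
    have habs : |(m:ℤ) - m₀| < p := by
      rw [abs_lt]; omega
    have hz : (m:ℤ) - m₀ = 0 := Int.eq_zero_of_abs_lt_dvd ⟨c - d, hsub⟩ habs
    have : (m:ℤ) = m₀ := by omega
    exact hne (by exact_mod_cast this)

end helper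

/-- For integers `p ≥ 2` and `q` coprime to `p`, with `μ_p = exp(2πi/p)`, the signature
defect sum `I_{p,q} = ∑_{k=1}^{p-1} (1+μ_p^k)(1+μ_p^{kq}) / ((1-μ_p^k)(1-μ_p^{kq}))`
satisfies `I_{p,q} = -4 p s(q,p)` where `s(q,p)` is the Dedekind sum. -/
theorem signature_defect_eq_dedekind_sum (p : ℕ) (hp : 2 ≤ p) (q : ℤ)
    (hq : IsCoprime q (p : ℤ)) :
    (∑ k ∈ Finset.Icc 1 (p - 1),
        ((1 + Complex.exp (2 * Real.pi * I / p) ^ (k : ℤ)) *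
            (1 + Complex.exp (2 * Real.pi * I / p) ^ ((k : ℤ) * q))) /
          ((1 - Complex.exp (2 * Real.pi * I / p) ^ (k : ℤ)) *
            (1 - Complex.exp (2 * Real.pi * I / p) ^ ((k : ℤ) * q)))) =
      ((-4 * (p : ℝ) *
          ∑ k ∈ Finset.Icc 1 (p - 1), saw ((k : ℝ) / p) * saw ((k : ℝ) * q / p) : ℝ) : ℂ) := by
  have hp0 : p ≠ 0 := by omega
  set ζ : ℂ := Complex.exp (2 * Real.pi * I / p) with hζ
  have hprim : IsPrimitiveRoot ζ p := Complex.isPrimitiveRoot_exp p hp0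
  have hζp : ζ ^ (p:ℕ) = 1 := hprim.pow_eq_one
  have hdvd : ∀ n : ℤ, ζ ^ n = 1 ↔ (p:ℤ) ∣ n := fun n => hprim.zpow_eq_one_iff_dvd n
  have hzpowp : ∀ n : ℤ, (ζ ^ n) ^ (p:ℕ) = 1 := by
    intro n
    rw [← zpow_natCast, ← zpow_mul, mul_comm, zpow_mul, zpow_natCast, hζp, one_zpow]
  have hknd : ∀ k ∈ Finset.Icc 1 (p-1), ¬ ((p:ℤ) ∣ (k:ℤ)) := by
    intro k hk hd
    rw [Finset.mem_Icc] at hk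
    have h1 : (p:ℤ) ≤ k := Int.le_of_dvd (by exact_mod_cast hk.1) hd
    have : (k:ℤ) < p := by exact_mod_cast (by omega : k < p)
    omega
  have hkqnd : ∀ k ∈ Finset.Icc 1 (p-1), ¬ ((p:ℤ) ∣ (k:ℤ)*q) := by
    intro k hk hd
    exact hknd k hk ((hq.symm).dvd_of_dvd_mul_right hd)
  -- step 1: rewrite each term
  have hterm : ∀ k ∈ Finset.Icc 1 (p-1),
      ((1 + ζ ^ (k:ℤ)) * (1 + ζ ^ ((k:ℤ)*q))) / ((1 - ζ ^ (k:ℤ)) * (1 - ζ ^ ((k:ℤ)*q)))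
        = ∑ m ∈ Finset.Icc 1 (p-1), ∑ l ∈ Finset.Icc 1 (p-1),
            4 * ((saw ((m:ℝ)/p) : ℝ) : ℂ) * ((saw ((l:ℝ)/p) : ℝ) : ℂ)
              * (ζ ^ ((m:ℤ) + (l:ℤ)*q)) ^ (k:ℕ) := by
    intro k hk
    have hA1 : ζ ^ (k:ℤ) ≠ 1 := fun h => hknd k hk ((hdvd _).mp h)
    have hB1 : ζ ^ ((k:ℤ)*q) ≠ 1 := fun h => hkqnd k hk ((hdvd _).mp h)
    have hSA := saw_fourier p hp _ hA1 (hzpowp (k:ℤ))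
    have hSB := saw_fourier p hp _ hB1 (hzpowp ((k:ℤ)*q))
    have hsplit : ((1 + ζ ^ (k:ℤ)) * (1 + ζ ^ ((k:ℤ)*q))) / ((1 - ζ ^ (k:ℤ)) * (1 - ζ ^ ((k:ℤ)*q)))
        = 4 * ((1 + ζ ^ (k:ℤ)) / (2*(ζ ^ (k:ℤ) - 1))) * ((1 + ζ ^ ((k:ℤ)*q)) / (2*(ζ ^ ((k:ℤ)*q) - 1))) := by
      have h1 : (1:ℂ) - ζ ^ (k:ℤ) ≠ 0 := fun h => hA1 (by linear_combination -h)
      have h2 : (1:ℂ) - ζ ^ ((k:ℤ)*q) ≠ 0 := fun h => hB1 (by linear_combination -h)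
      have h1' : ζ ^ (k:ℤ) - 1 ≠ 0 := sub_ne_zero.mpr hA1
      have h2' : ζ ^ ((k:ℤ)*q) - 1 ≠ 0 := sub_ne_zero.mpr hB1
      rw [mul_assoc, div_mul_div_comm, ← mul_div_assoc,
        div_eq_div_iff (mul_ne_zero h1 h2)
          (mul_ne_zero (mul_ne_zero two_ne_zero h1') (mul_ne_zero two_ne_zero h2'))]
      ring
    rw [hsplit, ← hSA, ← hSB, mul_assoc,
      Finset.sum_mul_sum _ _ _ _, Finset.mul_sum]
    apply Finset.sum_congr rfl
    intro m _
    rw [Finset.mul_sum]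
    apply Finset.sum_congr rfl
    intro l _
    have hpow : (ζ ^ ((m:ℤ) + (l:ℤ)*q)) ^ (k:ℕ) = (ζ^(k:ℤ))^m * (ζ^((k:ℤ)*q))^l := by
      rw [← zpow_natCast (ζ ^ ((m:ℤ) + (l:ℤ)*q)), ← zpow_mul,
          ← zpow_natCast (ζ ^ (k:ℤ)), ← zpow_mul,
          ← zpow_natCast (ζ ^ ((k:ℤ)*q)), ← zpow_mul, ← zpow_add₀]
      · congr 1; ring
      · exact hprim.ne_zero hp0
    rw [hpow]
    ring
  rw [Finset.sum_congr rfl hterm]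
  -- step 2: swap sums
  rw [Finset.sum_comm]
  have hswap : ∀ m ∈ Finset.Icc 1 (p-1),
      ∑ k ∈ Finset.Icc 1 (p-1), ∑ l ∈ Finset.Icc 1 (p-1),
          4 * ((saw ((m:ℝ)/p) : ℝ) : ℂ) * ((saw ((l:ℝ)/p) : ℝ) : ℂ)
            * (ζ ^ ((m:ℤ) + (l:ℤ)*q)) ^ (k:ℕ)
      = ∑ l ∈ Finset.Icc 1 (p-1),
          4 * ((saw ((m:ℝ)/p) : ℝ) : ℂ) * ((saw ((l:ℝ)/p) : ℝ) : ℂ)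
            * ((if ((p:ℤ) ∣ (m:ℤ) + (l:ℤ)*q) then (p:ℂ) else 0) - 1) := by
    intro m _
    rw [Finset.sum_comm]
    apply Finset.sum_congr rfl
    intro l _
    rw [← Finset.mul_sum, root_sum p hp _ (hzpowp ((m:ℤ) + (l:ℤ)*q))]
    congr 2
    simp only [hdvd]
  rw [Finset.sum_congr rfl hswap]
  -- split the inner term
  have e1 : ∑ m ∈ Finset.Icc 1 (p-1), ∑ l ∈ Finset.Icc 1 (p-1),
      4 * ((saw ((m:ℝ)/p) : ℝ) : ℂ) * ((saw ((l:ℝ)/p) : ℝ) : ℂ)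
        * ((if ((p:ℤ) ∣ (m:ℤ) + (l:ℤ)*q) then (p:ℂ) else 0) - 1)
      = ∑ m ∈ Finset.Icc 1 (p-1), ∑ l ∈ Finset.Icc 1 (p-1),
        ((4*(p:ℂ)) * (((saw ((l:ℝ)/p) : ℝ) : ℂ)
            * (if ((p:ℤ) ∣ (m:ℤ) + (l:ℤ)*q) then ((saw ((m:ℝ)/p) : ℝ) : ℂ) else 0))
          - 4 * (((saw ((m:ℝ)/p) : ℝ) : ℂ) * ((saw ((l:ℝ)/p) : ℝ) : ℂ))) := by
    refine Finset.sum_congr rfl fun m _ => Finset.sum_congr rfl fun l _ => ?_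
    split_ifs with h <;> ring
  rw [e1]
  have e2 : ∑ m ∈ Finset.Icc 1 (p-1), ∑ l ∈ Finset.Icc 1 (p-1),
        ((4*(p:ℂ)) * (((saw ((l:ℝ)/p) : ℝ) : ℂ)
            * (if ((p:ℤ) ∣ (m:ℤ) + (l:ℤ)*q) then ((saw ((m:ℝ)/p) : ℝ) : ℂ) else 0))
          - 4 * (((saw ((m:ℝ)/p) : ℝ) : ℂ) * ((saw ((l:ℝ)/p) : ℝ) : ℂ)))
      = (∑ m ∈ Finset.Icc 1 (p-1), ∑ l ∈ Finset.Icc 1 (p-1),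
          (4*(p:ℂ)) * (((saw ((l:ℝ)/p) : ℝ) : ℂ)
            * (if ((p:ℤ) ∣ (m:ℤ) + (l:ℤ)*q) then ((saw ((m:ℝ)/p) : ℝ) : ℂ) else 0)))
        - ∑ m ∈ Finset.Icc 1 (p-1), ∑ l ∈ Finset.Icc 1 (p-1),
            4 * (((saw ((m:ℝ)/p) : ℝ) : ℂ) * ((saw ((l:ℝ)/p) : ℝ) : ℂ)) := by
    rw [← Finset.sum_sub_distrib]
    exact Finset.sum_congr rfl fun m _ => by rw [Finset.sum_sub_distrib]
  rw [e2]
  -- second double sum vanishes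
  have h0 := saw_sum_zero p hp
  have eB : ∑ m ∈ Finset.Icc 1 (p-1), ∑ l ∈ Finset.Icc 1 (p-1),
      4 * (((saw ((m:ℝ)/p) : ℝ) : ℂ) * ((saw ((l:ℝ)/p) : ℝ) : ℂ)) = 0 := by
    have : ∀ m ∈ Finset.Icc 1 (p-1), ∑ l ∈ Finset.Icc 1 (p-1),
        4 * (((saw ((m:ℝ)/p) : ℝ) : ℂ) * ((saw ((l:ℝ)/p) : ℝ) : ℂ)) = 0 := by
      intro m _
      rw [show (∑ l ∈ Finset.Icc 1 (p-1),
          4 * (((saw ((m:ℝ)/p) : ℝ) : ℂ) * ((saw ((l:ℝ)/p) : ℝ) : ℂ)))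
        = (4 * ((saw ((m:ℝ)/p) : ℝ) : ℂ)) * ∑ l ∈ Finset.Icc 1 (p-1),
            ((saw ((l:ℝ)/p) : ℝ) : ℂ) from by
          rw [Finset.mul_sum]; exact Finset.sum_congr rfl fun l _ => by ring]
      rw [h0, mul_zero]
    rw [Finset.sum_congr rfl this, Finset.sum_const, smul_zero]
  rw [eB, sub_zero]
  -- evaluate the first double sum using `pick`
  rw [Finset.sum_comm]
  have eA : ∀ l ∈ Finset.Icc 1 (p-1), ∑ m ∈ Finset.Icc 1 (p-1),
      (4*(p:ℂ)) * (((saw ((l:ℝ)/p) : ℝ) : ℂ)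
        * (if ((p:ℤ) ∣ (m:ℤ) + (l:ℤ)*q) then ((saw ((m:ℝ)/p) : ℝ) : ℂ) else 0))
      = (4*(p:ℂ)) * (((saw ((l:ℝ)/p) : ℝ) : ℂ) * ((-(saw ((l:ℝ) * q / p)) : ℝ) : ℂ)) := by
    intro l hl
    rw [Finset.mem_Icc] at hl
    rw [← Finset.mul_sum, ← Finset.mul_sum, pick p hp q hq l hl.1 hl.2]
  rw [Finset.sum_congr rfl eA]
  push_cast
  rw [Finset.mul_sum]
  exact Finset.sum_congr rfl fun l _ => by ring
end
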